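/- For every n > 2, the number of touching pairs in any n-point subset of the lattice 2ℤ³ (pairs at distance exactly 2) is at most 3n − 3n^(2/3), and this bound is attained when n is a perfect cube. -/

import Mathlib

open scoped Classical

noncomputable section

/-- Number of unordered touching pairs (distance exactly 2) in a finite point set. -/
def touchingPairs (S : Finset (EuclideanSpace ℝ (Fin 3))) : ℕ :=
  (S.sym2.filter fun p => ¬ p.IsDiag ∧ ∃ x y, p = s(x, y) ∧ dist x y = 2).card

/-- The lattice 2ℤ³ inside ℝ³. -/
def doubledIntLattice : Set (EuclideanSpace ℝ (Fin 3)) :=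
  {x | ∀ i : Fin 3, ∃ m : ℤ, x i = 2 * m}

/-!
Scaling by `1/2` identifies `2ℤ³` with `ℤ³`, and touching pairs with the grid edges
`{a, a + eᵢ}`. On every line parallel to `eᵢ` the points of a finite `A ⊆ ℤ³` span fewer
edges than points, so `A` has at most `|A| - |πᵢ A|` edges in direction `i`, where `πᵢ`
forgets the `i`-th coordinate. The Loomis–Whitney inequality `|A|² ≤ |π₀ A| |π₁ A| |π₂ A|`
and AM–GM give `∑ᵢ |πᵢ A| ≥ 3 |A|^(2/3)`. The cube `{0, …, k-1}³` has `3 (k - 1) k²` edges,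
which is the bound for `n = k³`.
-/

open Finset

section LineFibres

variable {α β γ : Type*} [DecidableEq α] [DecidableEq β] [LinearOrder γ] {f : α → α}
  (φ : α → γ)

theorem card_filter_apply_mem_lt (hf : f.Injective) (hφ : ∀ a, φ a < φ (f a))
    {F : Finset α} (hF : F.Nonempty) : #{a ∈ F | f a ∈ F} < #F := by
  obtain ⟨m, hm, hmin⟩ := F.exists_min_image φ hF
  have hmaps : ({a ∈ F | f a ∈ F}.image f) ⊆ F.erase m := fun b hb => by
    obtain ⟨a, ha, rfl⟩ := mem_image.mp hb
    rw [mem_filter] at ha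
    exact mem_erase.mpr ⟨fun h => (hmin a ha.1).not_gt (h ▸ hφ a), ha.2⟩
  calc #{a ∈ F | f a ∈ F} = #({a ∈ F | f a ∈ F}.image f) := (card_image_of_injective _ hf).symm
    _ ≤ #(F.erase m) := card_le_card hmaps
    _ < #F := card_erase_lt_of_mem hm

theorem card_filter_apply_mem_add_card_image_le (hf : f.Injective) (hφ : ∀ a, φ a < φ (f a))
    (π : α → β) (hπ : ∀ a, π (f a) = π a) (A : Finset α) :
    #{a ∈ A | f a ∈ A} + #(A.image π) ≤ #A := by
  have hfibre : ∀ p ∈ A.image π, #{a ∈ {a ∈ A | f a ∈ A} | π a = p} < #{a ∈ A | π a = p} := by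
    intro p hp
    have hslice : {a ∈ {a ∈ A | f a ∈ A} | π a = p} =
        {a ∈ {a ∈ A | π a = p} | f a ∈ {a ∈ A | π a = p}} := by
      ext a
      simp only [mem_filter, hπ]
      tauto
    obtain ⟨a, ha, rfl⟩ := mem_image.mp hp
    rw [hslice]
    exact card_filter_apply_mem_lt φ hf hφ ⟨a, mem_filter.mpr ⟨ha, rfl⟩⟩
  have hmaps : Set.MapsTo π ↑{a ∈ A | f a ∈ A} ↑(A.image π) :=
    fun a ha => mem_image_of_mem π (mem_filter.mp ha).1
  calc #{a ∈ A | f a ∈ A} + #(A.image π)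
      = ∑ p ∈ A.image π, (#{a ∈ {a ∈ A | f a ∈ A} | π a = p} + 1) := by
        rw [sum_add_distrib, card_eq_sum_card_fiberwise hmaps, card_eq_sum_ones]
    _ ≤ ∑ p ∈ A.image π, #{a ∈ A | π a = p} := sum_le_sum hfibre
    _ = #A := (card_eq_sum_card_fiberwise fun a ha => mem_image_of_mem π ha).symm

end LineFibres

theorem card_sq_le_prod_card_image_removeNth {R : Type*} [DecidableEq R]
    (A : Finset (Fin 3 → R)) : #A ^ 2 ≤ ∏ i, #(A.image (Fin.removeNth i)) := by
  set P : Fin 3 → Finset (Fin 2 → R) := fun i => A.image (Fin.removeNth i)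
  set Z := A.image (· 2)
  have hslice_le_P2 (z : R) : #{a ∈ A | a 2 = z} ≤ #(P 2) := by
    refine card_le_card_of_injOn (Fin.removeNth 2)
      (fun a ha => mem_image_of_mem _ (mem_filter.mp ha).1) fun a ha b hb h => ?_
    funext j
    fin_cases j
    · exact congrFun h 0
    · exact congrFun h 1
    · exact (mem_filter.mp ha).2.trans (mem_filter.mp hb).2.symm
  -- `P 0` and `P 1` keep the last coordinate, as their coordinate `1`.
  have hslice_le_mul (z : R) :
      #{a ∈ A | a 2 = z} ≤ #{p ∈ P 1 | p 1 = z} * #{p ∈ P 0 | p 1 = z} := by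
    rw [← card_product]
    refine card_le_card_of_injOn (fun a => (Fin.removeNth 1 a, Fin.removeNth 0 a))
      (fun a ha => ?_) fun a _ b _ h => ?_
    · obtain ⟨haA, rfl⟩ := mem_filter.mp ha
      exact mem_product.mpr ⟨mem_filter.mpr ⟨mem_image_of_mem _ haA, rfl⟩,
        mem_filter.mpr ⟨mem_image_of_mem _ haA, rfl⟩⟩
    · obtain ⟨h1, h0⟩ := Prod.mk.inj h
      funext j
      fin_cases j
      · exact congrFun h1 0
      · exact congrFun h0 0
      · exact congrFun h1 1
  have hmaps (i : Fin 3) (hi : i ≠ 2) : Set.MapsTo (fun p : Fin 2 → R => p 1) (P i) Z := by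
    intro p hp
    obtain ⟨a, ha, rfl⟩ := mem_image.mp hp
    fin_cases i
    · exact mem_image_of_mem _ ha
    · exact mem_image_of_mem _ ha
    · exact absurd rfl hi
  calc #A ^ 2 = (∑ z ∈ Z, #{a ∈ A | a 2 = z}) ^ 2 := by
        rw [← card_eq_sum_card_fiberwise fun a ha => mem_image_of_mem _ ha]
    _ ≤ (∑ z ∈ Z, #(P 2) * #{p ∈ P 1 | p 1 = z}) * ∑ z ∈ Z, #{p ∈ P 0 | p 1 = z} :=
        sum_sq_le_sum_mul_sum_of_sq_le_mul Z (fun _ _ => Nat.zero_le _) (fun _ _ => Nat.zero_le _)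
          fun z _ => by
            rw [sq, mul_assoc]
            exact Nat.mul_le_mul (hslice_le_P2 z) (hslice_le_mul z)
    _ = ∏ i, #(P i) := by
        rw [← mul_sum, ← card_eq_sum_card_fiberwise (hmaps 1 (by decide)),
          ← card_eq_sum_card_fiberwise (hmaps 0 (by decide)), Fin.prod_univ_three]
        ring

theorem three_mul_rpow_two_div_three_le {x a b c : ℝ} (hx : 0 ≤ x) (ha : 0 ≤ a) (hb : 0 ≤ b)
    (hc : 0 ≤ c) (h : x ^ 2 ≤ a * b * c) : 3 * x ^ ((2 : ℝ) / 3) ≤ a + b + c := by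
  have hcube_root : x ^ ((2 : ℝ) / 3) ≤ (a * b * c) ^ ((1 : ℝ) / 3) := by
    rw [div_eq_mul_one_div, Real.rpow_mul hx, Real.rpow_two]
    exact Real.rpow_le_rpow (sq_nonneg x) h (by norm_num)
  have hamgm := Real.geom_mean_le_arith_mean3_weighted (w₁ := 1 / 3) (w₂ := 1 / 3) (w₃ := 1 / 3)
    (by norm_num) (by norm_num) (by norm_num) ha hb hc (by norm_num)
  rw [Real.mul_rpow (mul_nonneg ha hb) hc, Real.mul_rpow ha hb] at hcube_root
  linarith

theorem card_filter_add_single_mem_add_card_image_removeNth_le {d : ℕ}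
    (A : Finset (Fin (d + 1) → ℤ)) (i : Fin (d + 1)) :
    #{a ∈ A | a + Pi.single i 1 ∈ A} + #(A.image i.removeNth) ≤ #A :=
  card_filter_apply_mem_add_card_image_le (fun a => a i) (add_left_injective _) (by simp) _
    (fun a => by ext j; simp [Fin.removeNth_apply, Fin.succAbove_ne]) A

theorem sum_card_filter_add_single_mem_le (A : Finset (Fin 3 → ℤ)) :
    ((∑ i, #{a ∈ A | a + Pi.single i 1 ∈ A} : ℕ) : ℝ) ≤ 3 * #A - 3 * (#A : ℝ) ^ ((2 : ℝ) / 3) := by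
  have hedges : ∑ i, #{a ∈ A | a + Pi.single i 1 ∈ A} + ∑ i, #(A.image (Fin.removeNth i)) ≤
      3 * #A := by
    rw [← sum_add_distrib]
    simpa using sum_le_sum fun i (_ : i ∈ univ) =>
      card_filter_add_single_mem_add_card_image_removeNth_le A i
  have hproj : 3 * (#A : ℝ) ^ ((2 : ℝ) / 3) ≤ ∑ i, (#(A.image (Fin.removeNth i)) : ℝ) := by
    rw [Fin.sum_univ_three]
    refine three_mul_rpow_two_div_three_le (by positivity) (by positivity) (by positivity)
      (by positivity) ?_
    have hLW := card_sq_le_prod_card_image_removeNth A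
    rw [Fin.prod_univ_three] at hLW
    exact_mod_cast hLW
  have hedges' : ((∑ i, #{a ∈ A | a + Pi.single i 1 ∈ A} : ℕ) : ℝ) +
      ∑ i, (#(A.image (Fin.removeNth i)) : ℝ) ≤ 3 * #A := by exact_mod_cast hedges
  linarith

theorem Int.sum_sq_eq_one_iff {ι : Type*} [Fintype ι] [DecidableEq ι] (d : ι → ℤ) :
    ∑ i, d i ^ 2 = 1 ↔ ∃ i, d = Pi.single i 1 ∨ d = Pi.single i (-1) := by
  refine ⟨fun h => ?_, ?_⟩
  · obtain ⟨i, hi⟩ : ∃ i, d i ≠ 0 := by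
      by_contra! h0
      simp [h0] at h
    have hsplit := add_sum_erase univ (fun j => d j ^ 2) (mem_univ i)
    have hrest : ∑ j ∈ univ.erase i, d j ^ 2 = 0 := by
      have : 0 < d i ^ 2 := by positivity
      linarith [sum_nonneg fun j (_ : j ∈ univ.erase i) => sq_nonneg (d j)]
    have hzero (j : ι) (hj : j ≠ i) : d j = 0 :=
      pow_eq_zero_iff two_ne_zero |>.mp <| (sum_eq_zero_iff_of_nonneg fun j _ => sq_nonneg (d j)).mp
        hrest j (mem_erase.mpr ⟨hj, mem_univ j⟩)
    have hd : d = Pi.single i (d i) := funext fun j => by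
      rcases eq_or_ne j i with rfl | hj
      · simp
      · simp [hj, hzero j hj]
    rw [hrest, add_zero, h] at hsplit
    refine ⟨i, ?_⟩
    rw [hd]
    rcases sq_eq_one_iff.mp hsplit with h1 | h1 <;> simp [h1]
  · rintro ⟨i, rfl | rfl⟩ <;> simp [apply_ite (· ^ 2 : ℤ → ℤ), Pi.single_apply]

def doubledPoint (a : Fin 3 → ℤ) : EuclideanSpace ℝ (Fin 3) :=
  WithLp.toLp 2 fun i => 2 * a i

theorem doubledPoint_injective : doubledPoint.Injective := fun a b h => by
  ext i
  have := congrArg (· i) h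
  simpa [doubledPoint] using this

theorem range_doubledPoint : Set.range doubledPoint = doubledIntLattice := by
  ext x
  refine ⟨?_, fun hx => ?_⟩
  · rintro ⟨a, rfl⟩ i
    exact ⟨a i, rfl⟩
  · choose m hm using hx
    exact ⟨m, by ext i; simp [doubledPoint, hm]⟩

theorem dist_doubledPoint (a b : Fin 3 → ℤ) :
    dist (doubledPoint a) (doubledPoint b) = 2 * √((∑ i, (b i - a i) ^ 2 : ℤ) : ℝ) := by
  rw [EuclideanSpace.dist_eq, ← Real.sqrt_sq zero_le_two, ← Real.sqrt_mul (sq_nonneg 2)]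
  push_cast
  rw [mul_sum]
  congr 1
  refine sum_congr rfl fun i _ => ?_
  simp only [doubledPoint, Real.dist_eq, sq_abs]
  ring

theorem dist_doubledPoint_eq_two_iff (a b : Fin 3 → ℤ) :
    dist (doubledPoint a) (doubledPoint b) = 2 ↔
      ∃ i, b = a + Pi.single i 1 ∨ a = b + Pi.single i 1 := by
  have hsqrt : dist (doubledPoint a) (doubledPoint b) = 2 ↔ ∑ i, (b - a) i ^ 2 = 1 := by
    rw [dist_doubledPoint, mul_eq_left₀ two_ne_zero, Real.sqrt_eq_one]
    exact_mod_cast Iff.rfl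
  rw [hsqrt, Int.sum_sq_eq_one_iff]
  refine exists_congr fun i => or_congr sub_eq_iff_eq_add' ?_
  rw [Pi.single_neg]
  constructor <;> intro h <;> linear_combination -h

theorem touchingPairs_image_doubledPoint (A : Finset (Fin 3 → ℤ)) :
    touchingPairs (A.image doubledPoint) = ∑ i, #{a ∈ A | a + Pi.single i 1 ∈ A} := by
  rw [← card_sigma]
  refine (card_bij (fun x _ => s(doubledPoint x.2, doubledPoint (x.2 + Pi.single x.1 1)))
    ?_ ?_ ?_).symm
  · rintro ⟨i, a⟩ hx
    obtain ⟨ha, ha'⟩ := mem_filter.mp (mem_sigma.mp hx).2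
    refine mem_filter.mpr ⟨mk_mem_sym2_iff.mpr ⟨mem_image_of_mem _ ha, mem_image_of_mem _ ha'⟩,
      ?_, _, _, rfl, (dist_doubledPoint_eq_two_iff _ _).mpr ⟨i, .inl rfl⟩⟩
    rw [Sym2.mk_isDiag_iff, doubledPoint_injective.eq_iff, left_eq_add]
    exact Pi.single_ne_zero_iff.mpr one_ne_zero
  · rintro ⟨i, a⟩ - ⟨j, b⟩ - h
    rcases Sym2.eq_iff.mp h with ⟨hab, hab'⟩ | ⟨hab, hab'⟩
    · obtain rfl := doubledPoint_injective hab
      have hij := congrFun (add_left_cancel (doubledPoint_injective hab')) i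
      obtain rfl : i = j := by
        by_contra hne
        simp [hne] at hij
      rfl
    · have hab := doubledPoint_injective hab
      have hab' := congrFun (doubledPoint_injective hab') i
      rw [hab] at hab'
      simp only [Pi.add_apply, Pi.single_eq_same, Pi.single_apply] at hab'
      split_ifs at hab' <;> omega
  · intro p hp
    obtain ⟨hp, -, x, y, rfl, hxy⟩ := mem_filter.mp hp
    obtain ⟨hx, hy⟩ := mk_mem_sym2_iff.mp hp
    obtain ⟨a, ha, rfl⟩ := mem_image.mp hx
    obtain ⟨b, hb, rfl⟩ := mem_image.mp hy
    obtain ⟨i, rfl | rfl⟩ := (dist_doubledPoint_eq_two_iff a b).mp hxy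
    · exact ⟨⟨i, a⟩, mem_sigma.mpr ⟨mem_univ _, mem_filter.mpr ⟨ha, hb⟩⟩, rfl⟩
    · exact ⟨⟨i, b⟩, mem_sigma.mpr ⟨mem_univ _, mem_filter.mpr ⟨hb, ha⟩⟩, Sym2.eq_swap⟩

theorem card_filter_add_single_mem_piFinset_Ico {d : ℕ} (k : ℕ) (i : Fin (d + 1)) :
    #{a ∈ Fintype.piFinset (fun _ : Fin (d + 1) => Ico (0 : ℤ) k) |
        a + Pi.single i 1 ∈ Fintype.piFinset fun _ => Ico (0 : ℤ) k} = (k - 1) * k ^ d := by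
  have hfilter : {a ∈ Fintype.piFinset (fun _ : Fin (d + 1) => Ico (0 : ℤ) k) |
        a + Pi.single i 1 ∈ Fintype.piFinset fun _ => Ico (0 : ℤ) k} =
      Fintype.piFinset (Function.update (fun _ => Ico (0 : ℤ) k) i (Ico 0 (k - 1))) := by
    ext a
    simp only [mem_filter, Fintype.mem_piFinset, Pi.add_apply, ← forall_and]
    refine forall_congr' fun j => ?_
    rcases eq_or_ne j i with rfl | hj
    · simp only [Pi.single_eq_same, Function.update_self, mem_Ico]
      omega
    · simp [hj]
  rw [hfilter, Fintype.card_piFinset]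
  simp only [Function.apply_update (fun _ => Finset.card), prod_update_of_mem (mem_univ i)]
  simp [sdiff_singleton_eq_erase, card_erase_of_mem]

theorem grid_touching_pairs_bound_general (n : ℕ) :
    (∀ S : Finset (EuclideanSpace ℝ (Fin 3)),
        (S : Set (EuclideanSpace ℝ (Fin 3))) ⊆ doubledIntLattice → S.card = n →
          (touchingPairs S : ℝ) ≤ 3 * n - 3 * (n : ℝ) ^ ((2 : ℝ) / 3)) ∧
      (∀ k : ℕ, n = k ^ 3 →
        ∃ S : Finset (EuclideanSpace ℝ (Fin 3)),
          (S : Set (EuclideanSpace ℝ (Fin 3))) ⊆ doubledIntLattice ∧ S.card = n ∧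
            (touchingPairs S : ℝ) = 3 * n - 3 * (n : ℝ) ^ ((2 : ℝ) / 3)) := by
  refine ⟨fun S hS hcard => ?_, fun k hk => ?_⟩
  · rw [← range_doubledPoint, ← Set.image_univ, subset_set_image_iff] at hS
    obtain ⟨A, -, rfl⟩ := hS
    rw [touchingPairs_image_doubledPoint, ← hcard, card_image_of_injective _ doubledPoint_injective]
    exact sum_card_filter_add_single_mem_le A
  · subst hk
    set C := Fintype.piFinset fun _ : Fin 3 => Ico (0 : ℤ) k
    refine ⟨C.image doubledPoint, ?_, ?_, ?_⟩
    · rw [coe_image, ← range_doubledPoint]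
      exact Set.image_subset_range _ _
    · simp [C, card_image_of_injective _ doubledPoint_injective]
    · have hpow : ((k : ℝ) ^ 3) ^ ((2 : ℝ) / 3) = (k : ℝ) ^ 2 := by
        rw [← Real.rpow_natCast, ← Real.rpow_mul k.cast_nonneg]
        norm_num
      rw [touchingPairs_image_doubledPoint,
        sum_congr rfl fun i _ => card_filter_add_single_mem_piFinset_Ico (d := 2) k i]
      simp only [sum_const, card_univ, Fintype.card_fin, smul_eq_mul]
      push_cast
      rw [hpow]
      rcases k with _ | k
      · simp
      · push_cast
        ring

theorem grid_touching_pairs_bound (n : ℕ) (hn : 2 < n) :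
    (∀ S : Finset (EuclideanSpace ℝ (Fin 3)),
        (S : Set (EuclideanSpace ℝ (Fin 3))) ⊆ doubledIntLattice → S.card = n →
          (touchingPairs S : ℝ) ≤ 3 * n - 3 * (n : ℝ) ^ ((2 : ℝ) / 3)) ∧
      (∀ k : ℕ, n = k ^ 3 →
        ∃ S : Finset (EuclideanSpace ℝ (Fin 3)),
          (S : Set (EuclideanSpace ℝ (Fin 3))) ⊆ doubledIntLattice ∧ S.card = n ∧
            (touchingPairs S : ℝ) = 3 * n - 3 * (n : ℝ) ^ ((2 : ℝ) / 3)) :=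
  grid_touching_pairs_bound_general n
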